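/- Let m > 1 and m' = m/(m−1). Define P(u,w) = (m'/m) u^m − m' u w + w₊^{m'} and N(u,w) = u^m − 2 u^{m/2} w₊^{m'/2} + w₊^{m'} for u ≥ 0, w ∈ ℝ, where w₊ = max(w,0). Then N(u,w) ≤ m·P(u,w) for all u ≥ 0 and w ∈ ℝ. -/

import Mathlib

/-!
With `x = u ^ (m / 2)` and `y = w₊ ^ (m' / 2)` one has `N = (x - y) ^ 2`, and because
`m' - m' / m = m - m / m' = 1`, `m P - N = m m' ((x / m + y / m') ^ 2 - u w)`. Young's inequality
for `√u` and `√w₊`, squared, gives `u w ≤ u w₊ ≤ (x / m + y / m') ^ 2`.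
-/

namespace Real

theorem rpow_div_two_sq {a : ℝ} (ha : 0 ≤ a) (r : ℝ) : (a ^ (r / 2)) ^ 2 = a ^ r := by
  rw [← rpow_natCast, ← rpow_mul ha]
  norm_num

theorem mul_le_sq_young {a b p q : ℝ} (ha : 0 ≤ a) (hb : 0 ≤ b) (hpq : p.HolderConjugate q) :
    a * b ≤ (a ^ (p / 2) / p + b ^ (q / 2) / q) ^ 2 := by
  have young := young_inequality_of_nonneg (sqrt_nonneg a) (sqrt_nonneg b) hpq
  rw [← rpow_div_two_eq_sqrt p ha, ← rpow_div_two_eq_sqrt q hb] at young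
  calc a * b = (√a * √b) ^ 2 := by rw [mul_pow, sq_sqrt ha, sq_sqrt hb]
    _ ≤ _ := pow_le_pow_left₀ (by positivity) young 2

end Real

/-- N(u,w) ≤ m · P(u,w) for porous-medium nonlinearities. -/
theorem stmt10 (m : ℝ) (hm : 1 < m) (u w : ℝ) (hu : 0 ≤ u) :
    u ^ m - 2 * u ^ (m / 2) * (max w 0) ^ (m / (m - 1) / 2) + (max w 0) ^ (m / (m - 1)) ≤
      m * ((m / (m - 1) / m) * u ^ m - (m / (m - 1)) * u * w
        + (max w 0) ^ (m / (m - 1))) := by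
  set p := m / (m - 1)
  set v := max w 0
  have hv : 0 ≤ v := le_max_right w 0
  have young : u * w ≤ (u ^ (m / 2) / m + v ^ (p / 2) / p) ^ 2 :=
    (mul_le_mul_of_nonneg_left (le_max_left w 0) hu).trans
      (Real.mul_le_sq_young hu hv (.conjExponent hm))
  rw [← Real.rpow_div_two_sq hu m, ← Real.rpow_div_two_sq hv p]
  set x := u ^ (m / 2)
  set y := v ^ (p / 2)
  have hm0 : m ≠ 0 := by linarith
  have hm1 : m - 1 ≠ 0 := by linarith
  calc x ^ 2 - 2 * x * y + y ^ 2
      = m * (p / m * x ^ 2 + y ^ 2) - m * p * (x / m + y / p) ^ 2 := by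
        simp only [p]; field_simp; ring
    _ ≤ m * (p / m * x ^ 2 + y ^ 2) - m * p * (u * w) := by gcongr
    _ = m * (p / m * x ^ 2 - p * u * w + y ^ 2) := by ring
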